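/- arXiv:0901.1397 — 2 statements merged into one kernel-verified Lean document; each statement's English description precedes it below -/
import Mathlib

section
/- For every positive integer n, the n-th letter of the infinite word γ^ω(0) (the fixed point of the morphism γ(i) = 0·(i+1) starting from 0) equals ν₂(n), the exponent of the highest power of 2 dividing n. -/
/-- The morphism γ : ℕ* → ℕ* with γ(i) = 0·(i+1), applied letterwise to a word. -/
def gammaW (w : List ℕ) : List ℕ := (w.map fun i => [0, i + 1]).flatten

/-- The infinite word γ^ω(0), as a function giving the letter at (0-indexed) position `n`.
Since γ(0) = 0·1 begins with 0, each γ^m(0) is a prefix of γ^(m+1)(0), and γ^(n+1)(0)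
has length 2^(n+1) > n, so its `n`-th letter is the `n`-th letter of γ^ω(0). -/
def gammaOmega : ℕ → ℕ := fun n => (gammaW^[n + 1] [0]).getD n 0

/-! The word γ^(m+1)(0) = γ(γ^m(0)) carries `0` at (0-indexed) position `2k` and the `k`-th
letter of γ^m(0) plus one at position `2k + 1`. This matches `ν₂(2k + 1) = 0` and
`ν₂(2k + 2) = ν₂(k + 1) + 1`, so by induction on `m` the `k`-th letter of γ^m(0) is `ν₂(k + 1)`
for all `k < 2^m`. -/

@[simp]
lemma gammaW_nil : gammaW [] = [] := rfl

@[simp]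
lemma gammaW_cons (a : ℕ) (w : List ℕ) : gammaW (a :: w) = 0 :: (a + 1) :: gammaW w := by
  simp [gammaW]

@[simp]
lemma length_gammaW (w : List ℕ) : (gammaW w).length = 2 * w.length := by
  induction w with
  | nil => rfl
  | cons a w ih => simp only [gammaW_cons, List.length_cons, ih]; ring

lemma gammaW_getD_two_mul (w : List ℕ) (j : ℕ) : (gammaW w).getD (2 * j) 0 = 0 := by
  induction w generalizing j with
  | nil => simp
  | cons a w ih =>
    cases j with
    | zero => simp
    | succ j => simpa [Nat.mul_succ] using ih j

lemma gammaW_getD_two_mul_add_one (w : List ℕ) {j : ℕ} (hj : j < w.length) :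
    (gammaW w).getD (2 * j + 1) 0 = w.getD j 0 + 1 := by
  induction w generalizing j with
  | nil => simp at hj
  | cons a w ih =>
    cases j with
    | zero => simp
    | succ j => simpa [Nat.mul_succ] using ih (Nat.lt_of_succ_lt_succ hj)

lemma length_iterate_gammaW (m : ℕ) : (gammaW^[m] [0]).length = 2 ^ m := by
  induction m with
  | zero => rfl
  | succ m ih => rw [Function.iterate_succ_apply', length_gammaW, ih, pow_succ']

lemma padicValNat_two_two_mul_add_one (j : ℕ) : padicValNat 2 (2 * j + 1) = 0 :=
  padicValNat.eq_zero_of_not_dvd (by omega)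

lemma padicValNat_prime_mul {p j : ℕ} [hp : Fact p.Prime] (hj : j ≠ 0) :
    padicValNat p (p * j) = padicValNat p j + 1 := by
  rw [padicValNat.mul hp.out.ne_zero hj, padicValNat.self hp.out.one_lt, add_comm]

lemma iterate_gammaW_getD {m k : ℕ} (hk : k < 2 ^ m) :
    (gammaW^[m] [0]).getD k 0 = padicValNat 2 (k + 1) := by
  induction m generalizing k with
  | zero =>
    obtain rfl : k = 0 := by simpa using hk
    simp
  | succ m ih =>
    rw [Function.iterate_succ_apply']
    obtain ⟨j, rfl | rfl⟩ := Nat.even_or_odd' k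
    · rw [gammaW_getD_two_mul, padicValNat_two_two_mul_add_one]
    · have hj : j < 2 ^ m := by rw [pow_succ] at hk; omega
      rw [gammaW_getD_two_mul_add_one _ (by rwa [length_iterate_gammaW]), ih hj,
        show 2 * j + 1 + 1 = 2 * (j + 1) by ring, padicValNat_prime_mul j.succ_ne_zero]

/-- For every positive integer `n`, the `n`-th letter (1-indexed) of γ^ω(0) equals
ν₂(n), the exponent of the highest power of 2 dividing `n`. -/
theorem gammaOmega_eq_ruler (n : ℕ) (hn : 0 < n) :
    gammaOmega (n - 1) = padicValNat 2 n := by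
  have hlt : n - 1 < 2 ^ (n - 1 + 1) :=
    Nat.lt_two_pow_self.trans (Nat.pow_lt_pow_succ one_lt_two)
  rw [gammaOmega, iterate_gammaW_getD hlt, Nat.sub_add_cancel hn]
end

section
/- The morphism φ is an overlap-free morphism: for every finite word w over ℕ, if w is overlap-free then φ(w) is overlap-free. -/
/-!
Write `φ(c) = c · M_c · (c + 1)`, where `M_0 = 0` and `M_(c+1) = φ(M_c) · c · M_c`. The blocks
`φ(c)` start with pairwise distinct letters and end with pairwise distinct letters. If all
letters of `u` are at most `n`, every `n + 1` in `φ(u)` ends a block `φ(n)` and is preceded by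
`0`; and `φ(u)` never ends with `0`.

Take an overlap `y y a` (`y = a x`) in `φ(w)` and shrink `w` until the overlap meets its first
and last blocks in proper parts. If a single block `φ(c)` is left, the overlap avoids its end
letters, which occur fewer than three times in `φ(c)`, so it lies in `M_c`, a factor of
`φ^c(00)`, which is overlap-free by induction on `c`. Otherwise let `c` be the last
letter of `w` and `m` the largest one before it; `m + 1` occurs in `y`. If `c ≤ m`, the two
occurrences of `m + 1` one period apart desubstitute and the overlap lifts to `w`. If `c > m`,
the first letter `c` of the last block lies in the overlap; all other letters `c` nearby, in `M_c`
and in the image of the rest of `w`, are preceded by `0`, so periodicity makes the part of the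
overlap before the last block end with `0`, which is impossible.
-/

/-- S⁻¹: move the last letter of a nonempty word to the front. -/
def sInv (w : List ℕ) : List ℕ := w.rotate (w.length - 1)

/-- Apply a substitution `f` letterwise to a word (the morphism determined by `f`). -/
def applyM (f : ℕ → List ℕ) (w : List ℕ) : List ℕ := (w.map f).flatten

/-- Fuel-indexed approximation of the morphism φ: `phiAux n` agrees with φ on all
letters `c < n`.  (Computing φ^c(00) only uses φ on letters smaller than `c`, so the
recursion is well-founded in the fuel.) -/
def phiAux : ℕ → ℕ → List ℕ
  | 0, _ => []
  | n + 1, c => sInv ((applyM (phiAux n))^[c] [0, 0]) ++ [c + 1]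

/-- The morphism φ on letters: φ(h) = S⁻¹(φ^h(00))·(h+1).
In particular φ(0) = 001 and φ(1) = 1001002. -/
def phi (c : ℕ) : List ℕ := phiAux (c + 1) c

/-- The morphism φ on words. -/
def phiW (w : List ℕ) : List ℕ := applyM phi w

/-- A word over ℕ is overlap-free if it has no factor of the form a·x·a·x·a with
`a` a letter and `x` a (possibly empty) word. -/
def OverlapFree (w : List ℕ) : Prop :=
  ∀ (a : ℕ) (x : List ℕ), ¬ ([a] ++ x ++ [a] ++ x ++ [a]) <:+: w

namespace List

variable {α : Type*}

theorem exists_eq_append_of_append_eq_append_left {A B L M : List α} (h : A ++ B = L ++ M)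
    (hA : A.length ≤ L.length) : ∃ L', L = A ++ L' ∧ B = L' ++ M := by
  rcases append_eq_append_iff.1 h with h' | ⟨C, rfl, rfl⟩
  · exact h'
  · obtain rfl : C = [] := by simpa using hA
    exact ⟨[], by simp, rfl⟩

theorem exists_eq_append_of_append_eq_append_right {A B M R : List α} (h : A ++ B = M ++ R)
    (hB : B.length ≤ R.length) : ∃ R', R = R' ++ B ∧ A = M ++ R' := by
  rcases append_eq_append_iff.1 h with ⟨C, rfl, rfl⟩ | h'
  · obtain rfl : C = [] := by simpa using hB
    exact ⟨[], by simp, by simp⟩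
  · obtain ⟨R', rfl, rfl⟩ := h'
    exact ⟨R', rfl, rfl⟩

theorem exists_eq_append_cons_of_append_eq {L O R P S : List α} {k : α}
    (h : L ++ O ++ R = P ++ k :: S) (hL : L.length ≤ P.length) (hR : R.length ≤ S.length) :
    ∃ c d, O = c ++ k :: d ∧ P = L ++ c ∧ S = d ++ R := by
  rw [append_assoc] at h
  obtain ⟨c, rfl, h'⟩ := exists_eq_append_of_append_eq_append_left h hL
  rw [← singleton_append, ← append_assoc] at h'
  obtain ⟨d, rfl, rfl⟩ := exists_eq_append_of_append_eq_append_right h' hR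
  exact ⟨c, d, by simp, rfl, rfl⟩

theorem append_eq_append_cons_iff {A B C D : List α} {k : α} :
    A ++ B = C ++ k :: D ↔
      (∃ A', A = C ++ k :: A' ∧ D = A' ++ B) ∨ ∃ B', B = B' ++ k :: D ∧ C = A ++ B' := by
  rw [append_eq_append_iff]
  constructor
  · rintro (⟨B', rfl, hB⟩ | ⟨_ | ⟨k', A'⟩, rfl, hA⟩)
    · exact Or.inr ⟨B', hB, rfl⟩
    · exact Or.inr ⟨[], by simpa using hA.symm, by simp⟩
    · obtain ⟨rfl, rfl⟩ := cons_eq_cons.1 hA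
      exact Or.inl ⟨A', rfl, rfl⟩
  · rintro (⟨A', rfl, rfl⟩ | ⟨B', rfl, rfl⟩)
    · exact Or.inr ⟨k :: A', rfl, rfl⟩
    · exact Or.inl ⟨B', rfl, rfl⟩

end List

open List

theorem exists_overlap_infix_of_suffix_of_prefix {s t p : List ℕ} (hs : s <:+ t) (hp : p <+: t)
    (hlen : t.length < s.length + p.length) :
    ∃ a x, [a] ++ x ++ [a] ++ x ++ [a] <:+: s ++ t ++ p := by
  obtain ⟨T, rfl⟩ := hs
  have hTp : T <+: p :=
    prefix_of_prefix_length_le (prefix_append T s) hp (by simp only [length_append] at hlen; omega)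
  obtain ⟨s', rfl⟩ := hTp
  have hs' : s' <+: s := (prefix_append_right_inj T).1 hp
  have hs'ne : s' ≠ [] := ne_nil_of_length_pos (by simp only [length_append] at hlen; omega)
  obtain ⟨A, ξ, rfl⟩ := exists_cons_of_ne_nil hs'ne
  obtain ⟨u, rfl⟩ := hs'
  exact ⟨A, ξ ++ u ++ T, [], ξ, by simp⟩

theorem OverlapFree.of_infix {v w : List ℕ} (h : OverlapFree w) (hv : v <:+: w) :
    OverlapFree v :=
  fun a x hx => h a x (hx.trans hv)

theorem overlapFree_of_length_le {w : List ℕ} (h : w.length ≤ 2) : OverlapFree w := by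
  intro a x hx
  have := hx.length_le
  simp only [length_append, length_singleton] at this
  omega

theorem three_le_count_overlap (a : ℕ) (x : List ℕ) :
    3 ≤ ([a] ++ x ++ [a] ++ x ++ [a]).count a := by
  simp only [count_append, count_singleton_self]
  omega

theorem OverlapFree.cons_append_singleton {c d : ℕ} {M : List ℕ} (hM : OverlapFree M)
    (hc : (c :: (M ++ [d])).count c < 3) (hd : (c :: (M ++ [d])).count d < 3) :
    OverlapFree (c :: (M ++ [d])) := by
  intro a x hx
  rcases infix_cons_iff.1 hx with hpre | hx
  · have := (three_le_count_overlap a x).trans (hpre.sublist.count_le a)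
    obtain ⟨t, ht⟩ := hpre
    obtain rfl : a = c := by simpa using congrArg head? ht
    omega
  rcases infix_concat_iff.1 hx with hsuf | hx
  · have := (three_le_count_overlap a x).trans
      ((hsuf.sublist.trans (sublist_cons_self c _)).count_le a)
    obtain ⟨t, ht⟩ := hsuf
    obtain rfl : a = d := by
      have := congrArg getLast? ht
      simp only [← append_assoc, getLast?_concat] at this
      simpa using this
    omega
  · exact hM a x hx

section Morphism

variable {f : ℕ → List ℕ}

@[simp] theorem applyM_nil : applyM f [] = [] := rfl

@[simp] theorem applyM_cons (c : ℕ) (u : List ℕ) : applyM f (c :: u) = f c ++ applyM f u := rfl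

@[simp] theorem applyM_append (u v : List ℕ) : applyM f (u ++ v) = applyM f u ++ applyM f v := by
  simp [applyM]

theorem applyM_congr {g : ℕ → List ℕ} {u : List ℕ} (h : ∀ c ∈ u, f c = g c) :
    applyM f u = applyM g u := by
  simp only [applyM, map_congr_left h]

theorem reverse_applyM (u : List ℕ) :
    (applyM f u).reverse = applyM (fun c => (f c).reverse) u.reverse := by
  simp [applyM, reverse_flatten, map_reverse, Function.comp_def]

theorem exists_tight_infix_applyM {w L O R : List ℕ} (h : applyM f w = L ++ O ++ R) :
    ∃ v L' R', v <:+: w ∧ applyM f v = L' ++ O ++ R' ∧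
      (∀ v₁ v₂, v = v₁ ++ v₂ → v₁ ≠ [] → L'.length < (applyM f v₁).length) ∧
      (∀ v₁ v₂, v = v₁ ++ v₂ → v₂ ≠ [] → R'.length < (applyM f v₂).length) := by
  induction hN : w.length using Nat.strong_induction_on generalizing w L R with
  | _ N ih =>
  by_cases hl : ∃ v₁ v₂, w = v₁ ++ v₂ ∧ v₁ ≠ [] ∧ (applyM f v₁).length ≤ L.length
  · obtain ⟨v₁, v₂, rfl, hv₁, hlen⟩ := hl
    rw [applyM_append, append_assoc] at h
    obtain ⟨L', rfl, h'⟩ := exists_eq_append_of_append_eq_append_left h hlen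
    obtain ⟨v, L'', R', hv, rest⟩ :=
      ih v₂.length (by simp [← hN, length_pos_of_ne_nil hv₁]) (by rw [h', append_assoc]) rfl
    exact ⟨v, L'', R', hv.trans (suffix_append v₁ v₂).isInfix, rest⟩
  by_cases hr : ∃ v₁ v₂, w = v₁ ++ v₂ ∧ v₂ ≠ [] ∧ (applyM f v₂).length ≤ R.length
  · obtain ⟨v₁, v₂, rfl, hv₂, hlen⟩ := hr
    rw [applyM_append] at h
    obtain ⟨R', rfl, h'⟩ := exists_eq_append_of_append_eq_append_right h hlen
    obtain ⟨v, L', R'', hv, rest⟩ := ih v₁.length (by simp [← hN, length_pos_of_ne_nil hv₂]) h' rfl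
    exact ⟨v, L', R'', hv.trans (prefix_append v₁ v₂).isInfix, rest⟩
  push Not at hl hr
  exact ⟨w, L, R, infix_refl w, h, fun v₁ v₂ hw hv₁ => hl v₁ v₂ hw hv₁,
    fun v₁ v₂ hw hv₂ => hr v₁ v₂ hw hv₂⟩

theorem length_lt_add_of_applyM {s p t : List ℕ} (hs : s <:+ t) (hp : p <+: t)
    (h : (applyM f t).length < (applyM f s).length + (applyM f p).length) :
    t.length < s.length + p.length := by
  by_contra! hle
  obtain ⟨m, rfl⟩ := hp
  obtain ⟨m', rfl⟩ : s <:+ m :=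
    suffix_of_suffix_length_le hs (suffix_append p m) (by simp only [length_append] at hle; omega)
  simp only [applyM_append, length_append] at h hle
  omega

theorem exists_prefix_of_prefix_applyM {g : ℕ → ℕ} (hg : g.Injective)
    (hf : ∀ c, (f c).head? = some (g c)) {P : List ℕ} {u v : List ℕ}
    (hu : P <+: applyM f u) (hv : P <+: applyM f v) :
    ∃ s, s <+: u ∧ s <+: v ∧ P <+: applyM f s := by
  induction u generalizing P v with
  | nil => exact ⟨[], nil_prefix, nil_prefix, by simpa using hu⟩
  | cons c u ih =>
    rcases eq_or_ne P [] with rfl | hP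
    · exact ⟨[], nil_prefix, nil_prefix, nil_prefix⟩
    obtain ⟨p, P', rfl⟩ := exists_cons_of_ne_nil hP
    rcases v with _ | ⟨c', v⟩
    · simp at hv
    have head_eq : ∀ {b w}, p :: P' <+: applyM f (b :: w) → p = g b := fun {b w} h => by
      obtain ⟨t, ht⟩ := head?_eq_some_iff.1 (hf b)
      simp only [applyM_cons, ht, cons_append, cons_prefix_cons] at h
      exact h.1
    obtain rfl : c = c' := hg ((head_eq hu).symm.trans (head_eq hv))
    rcases le_total (p :: P').length (f c).length with hlen | hlen
    · refine ⟨[c], by simp, by simp, ?_⟩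
      exact prefix_of_prefix_length_le hu (by simp) (by simpa using hlen)
    · obtain ⟨P'', hP''⟩ := prefix_of_prefix_length_le (by simp) hu hlen
      rw [← hP''] at hu hv ⊢
      obtain ⟨s, hsu, hsv, hs⟩ := ih ((prefix_append_right_inj _).1 hu)
        ((prefix_append_right_inj _).1 hv)
      exact ⟨c :: s, by simpa using hsu, by simpa using hsv, by simpa using hs⟩

theorem exists_suffix_of_suffix_applyM {g : ℕ → ℕ} (hg : g.Injective)
    (hf : ∀ c, (f c).getLast? = some (g c)) {P : List ℕ} {u v : List ℕ}
    (hu : P <:+ applyM f u) (hv : P <:+ applyM f v) :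
    ∃ s, s <:+ u ∧ s <:+ v ∧ P <:+ applyM f s := by
  rw [← reverse_prefix, reverse_applyM] at hu hv
  obtain ⟨s, hsu, hsv, hs⟩ := exists_prefix_of_prefix_applyM hg (by simpa using hf) hu hv
  refine ⟨s.reverse, ?_, ?_, ?_⟩
  · simpa using hsu.reverse
  · simpa using hsv.reverse
  · rw [← reverse_prefix, reverse_applyM]
    simpa using hs

end Morphism

@[simp] theorem phiW_nil : phiW [] = [] := rfl

@[simp] theorem phiW_cons (c : ℕ) (u : List ℕ) : phiW (c :: u) = phi c ++ phiW u := rfl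

@[simp] theorem phiW_append (u v : List ℕ) : phiW (u ++ v) = phiW u ++ phiW v :=
  applyM_append u v

-- `phiMid c ++ [c] = φ^c(00)`, so that `phi c = c :: (phiMid c ++ [c + 1])`.
def phiMid : ℕ → List ℕ
  | 0 => [0]
  | c + 1 => phiW (phiMid c) ++ c :: phiMid c

theorem sInv_append_singleton (l : List ℕ) (c : ℕ) : sInv (l ++ [c]) = c :: l := by
  simp [sInv]

theorem iterate_applyM_phiAux {c m : ℕ} (hcm : c ≤ m)
    (h : ∀ b < c, (∀ m, b < m → phiAux m b = b :: (phiMid b ++ [b + 1])) ∧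
      ∀ a ∈ phiMid b, a ≤ b) :
    (applyM (phiAux m))^[c] [0, 0] = phiMid c ++ [c] := by
  induction c with
  | zero => rfl
  | succ c ih =>
    rw [Function.iterate_succ_apply', ih (by omega) fun b hb => h b (by omega)]
    have agree : ∀ b ∈ phiMid c ++ [c], phiAux m b = phi b := by
      intro b hb
      have hbc : b ≤ c := by
        rcases mem_append.1 hb with hb | hb
        · exact (h c (by omega)).2 b hb
        · simp_all
      rw [phi, (h b (by omega)).1 m (by omega), (h b (by omega)).1 (b + 1) (by omega)]
    have hc : phi c = c :: (phiMid c ++ [c + 1]) := (h c (by omega)).1 (c + 1) (by omega)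
    rw [applyM_congr agree]
    simp [phiMid, phiW, hc]

theorem phiAux_eq_and_le_of_mem_phiMid (c : ℕ) :
    (∀ m, c < m → phiAux m c = c :: (phiMid c ++ [c + 1])) ∧ ∀ b ∈ phiMid c, b ≤ c := by
  induction c using Nat.strong_induction_on with
  | _ c ih =>
  have hphi : ∀ b < c, phi b = b :: (phiMid b ++ [b + 1]) :=
    fun b hb => (ih b hb).1 (b + 1) (Nat.lt_succ_self b)
  refine ⟨fun m hm => ?_, fun b hb => ?_⟩
  · obtain ⟨m, rfl⟩ : ∃ m', m = m' + 1 := ⟨m - 1, by omega⟩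
    rw [phiAux, iterate_applyM_phiAux (by omega) ih, sInv_append_singleton, cons_append]
  cases c with
  | zero => simp_all [phiMid]
  | succ c =>
    simp only [phiMid, mem_append, mem_cons] at hb
    rcases hb with hb | rfl | hb
    · obtain ⟨b', hb', hb⟩ : ∃ b' ∈ phiMid c, b ∈ phi b' := by simpa [phiW, applyM] using hb
      have := (ih c (by omega)).2 b' hb'
      rw [hphi b' (by omega), mem_cons, mem_append, mem_singleton] at hb
      rcases hb with rfl | hb | rfl
      · omega
      · have := (ih b' (by omega)).2 b hb
        omega
      · omega
    · omega
    · have := (ih c (by omega)).2 b hb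
      omega

theorem phi_eq (c : ℕ) : phi c = c :: (phiMid c ++ [c + 1]) :=
  (phiAux_eq_and_le_of_mem_phiMid c).1 (c + 1) (Nat.lt_succ_self c)

theorem le_of_mem_phiMid {b c : ℕ} (h : b ∈ phiMid c) : b ≤ c :=
  (phiAux_eq_and_le_of_mem_phiMid c).2 b h

theorem not_mem_phiMid_of_lt {b c : ℕ} (h : c < b) : b ∉ phiMid c :=
  fun hb => absurd (le_of_mem_phiMid hb) (by omega)

theorem le_of_mem_phi {b c : ℕ} (h : b ∈ phi c) : b ≤ c + 1 := by
  rw [phi_eq] at h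
  rw [mem_cons, mem_append, mem_singleton] at h
  rcases h with rfl | h | rfl
  · omega
  · have := le_of_mem_phiMid h
    omega
  · rfl

theorem phiW_phiMid_append (c : ℕ) : phiW (phiMid c ++ [c]) = phiMid (c + 1) ++ [c + 1] := by
  simp [phi_eq, phiMid]

theorem count_succ_phiW {n : ℕ} {u : List ℕ} (hu : ∀ b ∈ u, b ≤ n) :
    (phiW u).count (n + 1) = u.count n := by
  induction u with
  | nil => rfl
  | cons b u ih =>
    have hb := hu b mem_cons_self
    have hmid : (phiMid b).count (n + 1) = 0 := count_eq_zero.2 (not_mem_phiMid_of_lt (by omega))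
    rw [phiW_cons, count_append, ih fun c hc => hu c (mem_cons_of_mem b hc), phi_eq]
    simp only [count_cons, count_append, hmid, count_nil, beq_iff_eq]
    split_ifs <;> omega

theorem count_phiMid_self (c : ℕ) : (phiMid c).count c = 1 := by
  induction c with
  | zero => rfl
  | succ c ih =>
    rw [phiMid, count_append, count_succ_phiW fun b => le_of_mem_phiMid, ih]
    simp [count_eq_zero.2 (not_mem_phiMid_of_lt (Nat.lt_succ_self c))]

theorem getLast?_phiMid (c : ℕ) : (phiMid c).getLast? = some 0 := by
  induction c with
  | zero => rfl
  | succ c ih => simp [phiMid, getLast?_append, getLast?_cons, ih]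

theorem getLast?_phiW_ne_zero {u : List ℕ} (hu : u ≠ []) : (phiW u).getLast? ≠ some 0 := by
  obtain ⟨u, c, rfl⟩ := (eq_nil_or_concat u).resolve_left hu
  simp [phi_eq, getLast?_append, getLast?_cons]

theorem head?_phi (c : ℕ) : (phi c).head? = some c := by simp [phi_eq]

theorem getLast?_phi (c : ℕ) : (phi c).getLast? = some (c + 1) := by
  simp [phi_eq, getLast?_cons]

theorem exists_eq_append_cons_of_phiW_eq {n : ℕ} {u G H : List ℕ} (hu : ∀ b ∈ u, b ≤ n)
    (h : phiW u = G ++ (n + 1) :: H) :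
    ∃ u₁ u₂, u = u₁ ++ n :: u₂ ∧ G = phiW u₁ ++ n :: phiMid n ∧ H = phiW u₂ := by
  induction u generalizing G with
  | nil => simp at h
  | cons b u ih =>
    have hb := hu b mem_cons_self
    rw [phiW_cons] at h
    rcases append_eq_append_cons_iff.1 h with ⟨t, hbt, rfl⟩ | ⟨G', hG', rfl⟩
    · obtain rfl : n = b := by
        have := le_of_mem_phi (hbt ▸ mem_append_right G mem_cons_self)
        omega
      rw [phi_eq, ← cons_append] at hbt
      have hn : n + 1 ∉ n :: phiMid n := by
        simp [not_mem_phiMid_of_lt (Nat.lt_succ_self n)]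
      obtain ⟨rfl, -, rfl⟩ := (append_cons_inj_of_notMem hn not_mem_nil).1 hbt
      exact ⟨[], u, rfl, by simp, by simp⟩
    · obtain ⟨u₁, u₂, rfl, rfl, rfl⟩ := ih (fun c hc => hu c (mem_cons_of_mem b hc)) hG'
      exact ⟨b :: u₁, u₂, rfl, by simp, rfl⟩

-- Taking `A = []` shows that `w` does not start with `k`.
def ZeroPrecedes (k : ℕ) (w : List ℕ) : Prop :=
  ∀ A B, w = A ++ k :: B → A.getLast? = some 0

theorem ZeroPrecedes.append {k : ℕ} {X Y : List ℕ} (hX : ZeroPrecedes k X) (hY : k ∉ Y) :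
    ZeroPrecedes k (X ++ Y) := by
  intro A B h
  rcases append_eq_append_cons_iff.1 h with ⟨A', rfl, -⟩ | ⟨B', rfl, -⟩
  · exact hX A A' rfl
  · exact absurd (mem_append_right B' mem_cons_self) hY

theorem zeroPrecedes_phiW {n : ℕ} {u : List ℕ} (hu : ∀ b ∈ u, b ≤ n) :
    ZeroPrecedes (n + 1) (phiW u) := by
  intro A B h
  obtain ⟨u₁, u₂, -, rfl, -⟩ := exists_eq_append_cons_of_phiW_eq hu h
  simp [getLast?_append, getLast?_cons, getLast?_phiMid]

theorem zeroPrecedes_phiMid_append (n : ℕ) : ZeroPrecedes (n + 1) (phiMid (n + 1) ++ [n + 2]) := by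
  rw [phiMid, append_assoc]
  refine (zeroPrecedes_phiW fun b => le_of_mem_phiMid).append ?_
  simp [not_mem_phiMid_of_lt (Nat.lt_succ_self n)]

-- Write the overlap as `y ++ y ++ [a]` with `y = a :: x`. Wherever the `K` sits, the letter just
-- before it, or before its copy one period away, is a `0` ending `cpre`; the one exception
-- (`cpre = []`) puts two `K`s into `d`.
theorem overlap_ne_append_cons {K a : ℕ} {x P W cpre d : List ℕ} (hP : ZeroPrecedes K P)
    (hP0 : P.getLast? ≠ some 0) (hW : ZeroPrecedes K W) (hWK : W.count K ≤ 1)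
    (hcpre : cpre <:+ P) (hd : d <+: W) :
    [a] ++ x ++ [a] ++ x ++ [a] ≠ cpre ++ K :: d := by
  obtain ⟨L, rfl⟩ := hcpre
  have hdK : d.count K ≤ 1 := (hd.sublist.count_le K).trans hWK
  obtain ⟨R, rfl⟩ := hd
  have hd : ∀ A B, d = A ++ K :: B → A.getLast? = some 0 :=
    fun A B h => hW A (B ++ R) (by simp [h])
  have hc : ∀ A B, cpre = A ++ K :: B → A ≠ [] → A.getLast? = some 0 := fun A B h hA => by
    rw [← getLast?_append_of_ne_nil L hA]
    exact hP (L ++ A) B (by simp [h])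
  have hc0 : cpre.getLast? ≠ some 0 := fun h => hP0 (by simp [h])
  intro hO
  rw [show [a] ++ x ++ [a] ++ x ++ [a] = (a :: x) ++ ((a :: x) ++ [a]) by simp] at hO
  rcases append_eq_append_cons_iff.1 hO with ⟨y, hy, rfl⟩ | ⟨B, hB, rfl⟩
  · rcases eq_or_ne cpre [] with rfl | hcpre
    · obtain ⟨rfl, rfl⟩ := cons_eq_cons.1 hy
      simp only [count_append, count_cons_self] at hdK
      omega
    · apply hc0
      rw [← getLast?_append_of_ne_nil y hcpre]
      exact hd (y ++ cpre) (y ++ [a]) (by rw [hy]; simp)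
  · rcases append_eq_append_cons_iff.1 hB with ⟨y, hy, rfl⟩ | ⟨B', hB', rfl⟩
    · rcases eq_or_ne B [] with rfl | hBne
      · obtain ⟨rfl, rfl⟩ := cons_eq_cons.1 hy
        apply hc0
        rw [append_nil, getLast?_cons, hd x [] rfl, Option.getD_some]
      · apply hc0
        rw [getLast?_append_of_ne_nil _ hBne]
        exact hc B (y ++ B) (by rw [hy]; simp) hBne
    · obtain ⟨rfl, rfl, rfl⟩ : B' = [] ∧ K = a ∧ d = [] := by
        rcases B' with _ | ⟨b, B'⟩ <;> simp_all
      apply hc0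
      rw [append_nil, getLast?_append_of_ne_nil _ (cons_ne_nil K x)]
      exact hc (K :: x) x (by simp) (cons_ne_nil K x)

-- Two occurrences of `n + 1` one period apart cut `v` as `u₁ ++ n :: z ++ n :: w`; a common suffix
-- of the images of `u₁ ++ [n]` and `z ++ [n]` and a common prefix of those of `w` and `z ++ [n]`
-- overlap in `z ++ [n]`, which lifts the overlap to `v`.
theorem not_overlap_infix_phiW_of_succ_mem {n a : ℕ} {x v : List ℕ} (hv : OverlapFree v)
    (hn : ∀ b ∈ v, b ≤ n) (hmem : n + 1 ∈ a :: x) :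
    ¬ [a] ++ x ++ [a] ++ x ++ [a] <:+: phiW v := by
  rintro ⟨L, R, hLR⟩
  obtain ⟨y₁, y₂, hy⟩ := append_of_mem hmem
  obtain ⟨t, ht⟩ : ∃ t, y₁ ++ [n + 1] = a :: t := by
    rcases y₁ with _ | ⟨b, y₁⟩
    · exact ⟨[], by simp_all⟩
    · exact ⟨y₁ ++ [n + 1], by simp_all⟩
  have h₁ : phiW v = (L ++ y₁) ++ (n + 1) :: (y₂ ++ y₁ ++ (n + 1) :: (y₂ ++ a :: R)) := by
    rw [← hLR, show [a] ++ x ++ [a] ++ x ++ [a] = (a :: x) ++ (a :: x) ++ [a] by simp, hy]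
    simp
  obtain ⟨u₁, v₁, rfl, hu₁, hv₁⟩ := exists_eq_append_cons_of_phiW_eq hn h₁
  obtain ⟨z, w, rfl, hz, hw⟩ :=
    exists_eq_append_cons_of_phiW_eq (fun b hb => hn b (by simp [hb])) hv₁.symm
  have e₁ : phiW (u₁ ++ [n]) = L ++ (y₁ ++ [n + 1]) := by
    rw [← append_assoc, hu₁]
    simp [phi_eq]
  have e₂ : phiW (z ++ [n]) = y₂ ++ (y₁ ++ [n + 1]) := by
    rw [← append_assoc, hz]
    simp [phi_eq]
  obtain ⟨s, hsu, hsz, hs⟩ := exists_suffix_of_suffix_applyM (f := phi) Nat.succ_injective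
    getLast?_phi (⟨L, e₁.symm⟩ : y₁ ++ [n + 1] <:+ phiW (u₁ ++ [n])) ⟨y₂, e₂.symm⟩
  obtain ⟨p, hpw, hpz, hp⟩ := exists_prefix_of_prefix_applyM (f := phi) (g := id)
    Function.injective_id head?_phi (⟨R, by simp [hw]⟩ : y₂ ++ [a] <+: phiW w)
    (⟨t, by rw [e₂, ht]; simp⟩ : y₂ ++ [a] <+: phiW (z ++ [n]))
  have hlen : (z ++ [n]).length < s.length + p.length := by
    refine length_lt_add_of_applyM (f := phi) hsz hpz ?_
    have hs' := hs.length_le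
    have hp' := hp.length_le
    change (phiW (z ++ [n])).length < _
    simp only [e₂, length_append, length_singleton] at hs' hp' ⊢
    omega
  obtain ⟨b, x', hb⟩ := exists_overlap_infix_of_suffix_of_prefix hsz hpz hlen
  obtain ⟨S, hS⟩ := hsu
  obtain ⟨P, rfl⟩ := hpw
  refine hv b x' (hb.trans ⟨S, P, ?_⟩)
  rw [show u₁ ++ n :: (z ++ n :: (p ++ P)) = u₁ ++ [n] ++ (z ++ [n]) ++ p ++ P by simp, ← hS]
  simp

theorem succ_mem_of_phiW_eq {u L O R : List ℕ} {c m : ℕ} (hm : m ∈ u)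
    (h : phiW (u ++ [c]) = L ++ O ++ R)
    (hL : ∀ v₁ v₂, u ++ [c] = v₁ ++ v₂ → v₁ ≠ [] → L.length < (phiW v₁).length)
    (hR : R.length < (phi c).length) : m + 1 ∈ O := by
  obtain ⟨α, γ, rfl⟩ := append_of_mem hm
  have hsplit : phiW (α ++ m :: γ ++ [c]) =
      (phiW α ++ m :: phiMid m) ++ (m + 1) :: phiW (γ ++ [c]) := by
    simp [phi_eq]
  have hα := hL (α ++ [m]) (γ ++ [c]) (by simp) (by simp)
  obtain ⟨_, _, rfl, -, -⟩ := exists_eq_append_cons_of_append_eq (h.symm.trans hsplit)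
    (by simp [phi_eq] at hα ⊢; omega) (by simp [phi_eq] at hR ⊢; omega)
  exact mem_append_right _ mem_cons_self

theorem phiW_append_singleton_ne {u L R x : List ℕ} {a c : ℕ} (hv : OverlapFree (u ++ [c]))
    (hu : u ≠ []) (hL : ∀ v₁ v₂, u ++ [c] = v₁ ++ v₂ → v₁ ≠ [] → L.length < (phiW v₁).length)
    (hR : R.length < (phi c).length) :
    phiW (u ++ [c]) ≠ L ++ ([a] ++ x ++ [a] ++ x ++ [a]) ++ R := by
  intro h
  obtain ⟨m, hm, hmax⟩ : ∃ m ∈ u, ∀ b ∈ u, b ≤ m :=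
    ⟨_, maximum_of_length_pos_mem (length_pos_of_ne_nil hu),
      fun b hb => le_maximum_of_length_pos_of_mem hb _⟩
  have hmO : m + 1 ∈ a :: x := by
    have := succ_mem_of_phiW_eq hm h hL hR
    simp only [mem_append, mem_singleton] at this
    rw [mem_cons]
    tauto
  rcases le_or_gt c m with hcm | hmc
  · refine not_overlap_infix_phiW_of_succ_mem hv (fun b hb => ?_) hmO ⟨L, R, h.symm⟩
    rcases mem_append.1 hb with hb | hb
    · exact hmax b hb
    · simp_all
  · obtain ⟨n, rfl⟩ : ∃ n, c = n + 1 := ⟨c - 1, by omega⟩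
    have hsplit : phiW (u ++ [n + 1]) = phiW u ++ (n + 1) :: (phiMid (n + 1) ++ [n + 2]) := by
      simp [phi_eq]
    obtain ⟨cpre, d, hO, hP, hW⟩ := exists_eq_append_cons_of_append_eq (h.symm.trans hsplit)
      (hL u [n + 1] rfl hu).le (by simp [phi_eq] at hR ⊢; omega)
    refine overlap_ne_append_cons (zeroPrecedes_phiW fun b hb => ?_) (getLast?_phiW_ne_zero hu)
      (zeroPrecedes_phiMid_append n) ?_ ⟨L, hP.symm⟩ ⟨R, hW.symm⟩ hO
    · have := hmax b hb
      omega
    · simp [count_phiMid_self]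

theorem OverlapFree.phiW {w : List ℕ} (hw : OverlapFree w) (hφ : ∀ b ∈ w, OverlapFree (phi b)) :
    OverlapFree (phiW w) := by
  rintro a x ⟨L, R, h⟩
  obtain ⟨v, L', R', hvw, hv, hL, hR⟩ := exists_tight_infix_applyM (f := phi) h.symm
  rcases eq_nil_or_concat v with rfl | ⟨u, c, rfl⟩
  · simp at hv
  rw [concat_eq_append] at hvw hv hL hR
  rcases eq_or_ne u [] with rfl | hu
  · exact hφ c (hvw.subset (by simp)) a x ⟨L', R', by simpa using hv.symm⟩
  · exact phiW_append_singleton_ne (hw.of_infix hvw) hu hL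
      (by simpa using hR u [c] rfl (by simp)) hv

theorem overlapFree_phi_of_overlapFree_phiMid_append {c : ℕ}
    (h : OverlapFree (phiMid c ++ [c])) : OverlapFree (phi c) := by
  rw [phi_eq]
  refine (h.of_infix (prefix_append _ _).isInfix).cons_append_singleton ?_ ?_
  · simp [count_phiMid_self]
  · simp [count_eq_zero.2 (not_mem_phiMid_of_lt (Nat.lt_succ_self c))]

theorem overlapFree_phiMid_append (c : ℕ) : OverlapFree (phiMid c ++ [c]) := by
  induction c using Nat.strong_induction_on with
  | _ c ih =>
  cases c with
  | zero => exact overlapFree_of_length_le (by simp [phiMid])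
  | succ c =>
    rw [← phiW_phiMid_append]
    refine (ih c (by omega)).phiW fun b hb => overlapFree_phi_of_overlapFree_phiMid_append
      (ih b ?_)
    rcases mem_append.1 hb with hb | hb
    · have := le_of_mem_phiMid hb
      omega
    · simp_all

theorem overlapFree_phi (c : ℕ) : OverlapFree (phi c) :=
  overlapFree_phi_of_overlapFree_phiMid_append (overlapFree_phiMid_append c)

/-- φ is an overlap-free morphism. -/
theorem phi_overlapFree (w : List ℕ) (hw : OverlapFree w) : OverlapFree (phiW w) :=
  hw.phiW fun b _ => overlapFree_phi b
end
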